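/- arXiv:1802.00612 — 2 statements merged into one kernel-verified Lean document; each statement's English description precedes it below -/
import Mathlib

section
/- For every α ∈ (1,2) and every t ∈ ℝ one has t²/(2−α) ≤ 2 ∫₀¹ (cosh(tx) − 1) x^{−α−1} dx ≤ t²/(2−α) + (1/24) t⁴ (14/15 + (1/15) cosh(t)). Equivalently, a real random variable X̃₁ with moment generating function E[exp(t X̃₁)] = exp( 2∫₀¹ (cosh(tx) − 1) x^{−α−1} dx ) satisfies exp(t²/(2−α)) ≤ E[exp(t X̃₁)] ≤ exp( (1/24) t⁴ (14/15 + (1/15) cosh(t)) ) · exp(t²/(2−α)). -/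
/-!
Comparing the power series of `cosh` termwise gives `y²/2 ≤ cosh y - 1` and, since
`(2n+6)! ≥ 360 (2n+2)!`, `cosh y - 1 - y²/2 - y⁴/24 ≤ y⁴ (cosh y - 1) / 360`. For `y = t x` with
`0 < x < 1` we have `cosh y ≤ cosh t`, so `cosh y - 1 ≤ y²/2 + (y⁴/24)(14/15 + cosh t / 15)`.
Integrating both bounds against `x^(-α-1)` over `(0, 1)`, with `∫₀¹ x^(n-α-1) dx = 1/(n-α)` and
`1/(4-α) ≤ 1/2`, bounds the exponent; the bounds on the moment generating function follow by
monotonicity of `exp`.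
-/

open MeasureTheory Real Set
open scoped Nat

lemma Nat.mul_factorial_le_factorial_add_four (m : ℕ) : 360 * (m + 2)! ≤ (m + 6)! := by
  have h : 360 ≤ (m + 6) * (m + 5) * (m + 4) * (m + 3) := by
    calc 360 = 6 * 5 * 4 * 3 := rfl
      _ ≤ _ := by gcongr <;> omega
  calc 360 * (m + 2)! ≤ (m + 6) * (m + 5) * (m + 4) * (m + 3) * (m + 2)! :=
        Nat.mul_le_mul_right _ h
    _ = (m + 6)! := by simp only [Nat.factorial_succ]; ring

namespace Real

lemma sq_div_two_le_cosh_sub_one (y : ℝ) : y ^ 2 / 2 ≤ cosh y - 1 := by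
  have htail : HasSum (fun n ↦ y ^ (2 * (n + 2)) / ↑(2 * (n + 2))!) (cosh y - 1 - y ^ 2 / 2) := by
    simpa [Finset.sum_range_succ, ← sub_sub] using (hasSum_nat_add_iff' 2).mpr (hasSum_cosh y)
  have := htail.nonneg fun n ↦ by rw [pow_mul]; positivity
  linarith

lemma cosh_sub_taylor_le (y : ℝ) :
    cosh y - 1 - y ^ 2 / 2 - y ^ 4 / 24 ≤ y ^ 4 / 360 * (cosh y - 1) := by
  have htail : HasSum (fun n ↦ y ^ (2 * (n + 3)) / ↑(2 * (n + 3))!)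
      (cosh y - 1 - y ^ 2 / 2 - y ^ 4 / 24) := by
    simpa [Finset.sum_range_succ, Nat.factorial, ← sub_sub] using
      (hasSum_nat_add_iff' 3).mpr (hasSum_cosh y)
  have hhead : HasSum (fun n ↦ y ^ 4 / 360 * (y ^ (2 * (n + 1)) / ↑(2 * (n + 1))!))
      (y ^ 4 / 360 * (cosh y - 1)) := by
    simpa using ((hasSum_nat_add_iff' 1).mpr (hasSum_cosh y)).mul_left (y ^ 4 / 360)
  refine hasSum_le (fun n ↦ ?_) htail hhead
  have hfact : (360 : ℝ) * (2 * n + 2)! ≤ (2 * n + 6)! := by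
    exact_mod_cast Nat.mul_factorial_le_factorial_add_four (2 * n)
  calc y ^ (2 * (n + 3)) / ↑(2 * (n + 3))! = y ^ 4 * (y ^ 2) ^ (n + 1) / (2 * n + 6)! := by
        ring_nf
    _ ≤ y ^ 4 * (y ^ 2) ^ (n + 1) / (360 * (2 * n + 2)!) := by gcongr
    _ = _ := by ring_nf

lemma cosh_sub_one_le_of_abs_le {y t : ℝ} (h : |y| ≤ |t|) :
    cosh y - 1 ≤ y ^ 2 / 2 + y ^ 4 / 24 * (14 / 15 + 1 / 15 * cosh t) := by
  have hrem := cosh_sub_taylor_le y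
  have hcosh : cosh y ≤ cosh t := cosh_le_cosh.mpr h
  have : y ^ 4 / 360 * (cosh y - 1) ≤ y ^ 4 / 360 * (cosh t - 1) := by gcongr
  linarith

end Real

lemma integral_Ioo_zero_one_rpow {p : ℝ} (hp : -1 < p) :
    ∫ x in Ioo (0 : ℝ) 1, x ^ p = (p + 1)⁻¹ := by
  rw [← integral_Ioc_eq_integral_Ioo, ← intervalIntegral.integral_of_le zero_le_one,
    integral_rpow (Or.inl hp), one_rpow, zero_rpow (by linarith), sub_zero, one_div]

lemma integrableOn_Ioo_zero_one_rpow {p : ℝ} (hp : -1 < p) :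
    IntegrableOn (fun x : ℝ ↦ x ^ p) (Ioo 0 1) :=
  (intervalIntegrable_iff_integrableOn_Ioo_of_le zero_le_one).mp
    (intervalIntegral.intervalIntegrable_rpow' hp)

lemma pow_mul_rpow_neg_sub_one {x : ℝ} (hx : 0 < x) (n : ℕ) (α : ℝ) :
    x ^ n * x ^ (-α - 1) = x ^ (n - α - 1 : ℝ) := by
  rw [← rpow_natCast, ← rpow_add hx]
  ring_nf

lemma integral_Ioo_zero_one_pow_mul_rpow {α : ℝ} {n : ℕ} (h : α < n) :
    ∫ x in Ioo (0 : ℝ) 1, x ^ n * x ^ (-α - 1) = (n - α)⁻¹ := by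
  rw [setIntegral_congr_fun measurableSet_Ioo fun x hx ↦ pow_mul_rpow_neg_sub_one hx.1 n α,
    integral_Ioo_zero_one_rpow (by linarith)]
  ring_nf

lemma integrableOn_Ioo_zero_one_pow_mul_rpow {α : ℝ} {n : ℕ} (h : α < n) :
    IntegrableOn (fun x : ℝ ↦ x ^ n * x ^ (-α - 1)) (Ioo 0 1) :=
  (integrableOn_Ioo_zero_one_rpow (p := n - α - 1) (by linarith)).congr_fun
    (fun x hx ↦ (pow_mul_rpow_neg_sub_one hx.1 n α).symm) measurableSet_Ioo

section SmallJumps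

variable {α : ℝ} (t : ℝ)

lemma le_cosh_mul_sub_one_mul_rpow {x : ℝ} (hx : 0 ≤ x) :
    t ^ 2 / 2 * (x ^ 2 * x ^ (-α - 1)) ≤ (cosh (t * x) - 1) * x ^ (-α - 1) := by
  have h := sq_div_two_le_cosh_sub_one (t * x)
  have hw := rpow_nonneg hx (-α - 1)
  calc t ^ 2 / 2 * (x ^ 2 * x ^ (-α - 1)) = (t * x) ^ 2 / 2 * x ^ (-α - 1) := by ring
    _ ≤ _ := by gcongr

lemma cosh_mul_sub_one_mul_rpow_le {x : ℝ} (hx : x ∈ Icc 0 1) :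
    (cosh (t * x) - 1) * x ^ (-α - 1) ≤
      t ^ 2 / 2 * (x ^ 2 * x ^ (-α - 1)) +
        t ^ 4 / 24 * (14 / 15 + 1 / 15 * cosh t) * (x ^ 4 * x ^ (-α - 1)) := by
  have habs : |t * x| ≤ |t| := by
    rw [abs_mul, abs_of_nonneg hx.1]
    exact mul_le_of_le_one_right (abs_nonneg t) hx.2
  have h := cosh_sub_one_le_of_abs_le habs
  have hw := rpow_nonneg hx.1 (-α - 1)
  calc (cosh (t * x) - 1) * x ^ (-α - 1)
      ≤ ((t * x) ^ 2 / 2 + (t * x) ^ 4 / 24 * (14 / 15 + 1 / 15 * cosh t)) * x ^ (-α - 1) := by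
        gcongr
    _ = _ := by ring

lemma integrableOn_cosh_mul_sub_one_mul_rpow (hα : α < 2) :
    IntegrableOn (fun x ↦ (cosh (t * x) - 1) * x ^ (-α - 1)) (Ioo 0 1) := by
  have hα2 : α < (2 : ℕ) := by norm_num; linarith
  have hα4 : α < (4 : ℕ) := by norm_num; linarith
  have h2 := (integrableOn_Ioo_zero_one_pow_mul_rpow hα2).const_mul (t ^ 2 / 2)
  have h4 := (integrableOn_Ioo_zero_one_pow_mul_rpow hα4).const_mul
    (t ^ 4 / 24 * (14 / 15 + 1 / 15 * cosh t))
  refine (h2.add h4).mono' (by fun_prop) ?_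
  filter_upwards [ae_restrict_mem measurableSet_Ioo] with x hx
  rw [norm_of_nonneg (mul_nonneg (sub_nonneg.2 (one_le_cosh _)) (rpow_nonneg hx.1.le _))]
  exact cosh_mul_sub_one_mul_rpow_le t (Ioo_subset_Icc_self hx)

lemma sq_div_le_two_mul_integral_cosh_mul_sub_one_mul_rpow (hα : α < 2) :
    t ^ 2 / (2 - α) ≤ 2 * ∫ x in Ioo (0 : ℝ) 1, (cosh (t * x) - 1) * x ^ (-α - 1) := by
  have hα2 : α < (2 : ℕ) := by norm_num; linarith
  have hmono := setIntegral_mono_on ((integrableOn_Ioo_zero_one_pow_mul_rpow hα2).const_mul _)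
    (integrableOn_cosh_mul_sub_one_mul_rpow t hα) measurableSet_Ioo
    fun x hx ↦ le_cosh_mul_sub_one_mul_rpow t hx.1.le
  rw [integral_const_mul, integral_Ioo_zero_one_pow_mul_rpow hα2] at hmono
  calc t ^ 2 / (2 - α) = 2 * (t ^ 2 / 2 * ((2 : ℕ) - α)⁻¹) := by push_cast; ring
    _ ≤ _ := by gcongr

lemma two_mul_integral_cosh_mul_sub_one_mul_rpow_le (hα : α < 2) :
    2 * ∫ x in Ioo (0 : ℝ) 1, (cosh (t * x) - 1) * x ^ (-α - 1) ≤
      t ^ 2 / (2 - α) + 1 / 24 * t ^ 4 * (14 / 15 + 1 / 15 * cosh t) := by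
  have hα2 : α < (2 : ℕ) := by norm_num; linarith
  have hα4 : α < (4 : ℕ) := by norm_num; linarith
  have h2 := (integrableOn_Ioo_zero_one_pow_mul_rpow hα2).const_mul (t ^ 2 / 2)
  have h4 := (integrableOn_Ioo_zero_one_pow_mul_rpow hα4).const_mul
    (t ^ 4 / 24 * (14 / 15 + 1 / 15 * cosh t))
  have hmono := setIntegral_mono_on (integrableOn_cosh_mul_sub_one_mul_rpow t hα) (h2.add h4)
    measurableSet_Ioo fun x hx ↦ cosh_mul_sub_one_mul_rpow_le t (Ioo_subset_Icc_self hx)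
  rw [Pi.add_def, integral_add h2 h4, integral_const_mul, integral_const_mul,
    integral_Ioo_zero_one_pow_mul_rpow hα2, integral_Ioo_zero_one_pow_mul_rpow hα4] at hmono
  have hC : 0 ≤ t ^ 4 / 24 * (14 / 15 + 1 / 15 * cosh t) := by
    have := one_le_cosh t
    positivity
  have hinv : ((4 : ℕ) - α : ℝ)⁻¹ ≤ 2⁻¹ := by
    push_cast
    exact inv_anti₀ two_pos (by linarith)
  calc 2 * ∫ x in Ioo (0 : ℝ) 1, (cosh (t * x) - 1) * x ^ (-α - 1)
      ≤ 2 * (t ^ 2 / 2 * ((2 : ℕ) - α)⁻¹ +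
          t ^ 4 / 24 * (14 / 15 + 1 / 15 * cosh t) * ((4 : ℕ) - α)⁻¹) := by gcongr
    _ ≤ 2 * (t ^ 2 / 2 * ((2 : ℕ) - α)⁻¹ + t ^ 4 / 24 * (14 / 15 + 1 / 15 * cosh t) * 2⁻¹) := by
        gcongr
    _ = _ := by push_cast; ring

end SmallJumps

theorem mgf_bounds_small_jumps_symmetric_general
    {Ω : Type*} [MeasurableSpace Ω] (μ : Measure Ω)
    (α : ℝ) (hα : α ∈ Set.Ioo (1:ℝ) 2)
    (X : Ω → ℝ)
    (hmgf : ∀ t : ℝ, ∫ ω, Real.exp (t * X ω) ∂μ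
      = Real.exp (2 * ∫ x in Set.Ioo (0:ℝ) 1, (Real.cosh (t*x) - 1) * x ^ (-α-1))) :
    ∀ t : ℝ,
      (t^2/(2-α) ≤ 2 * ∫ x in Set.Ioo (0:ℝ) 1, (Real.cosh (t*x) - 1) * x ^ (-α-1)
        ∧ 2 * ∫ x in Set.Ioo (0:ℝ) 1, (Real.cosh (t*x) - 1) * x ^ (-α-1)
            ≤ t^2/(2-α) + (1/24) * t^4 * (14/15 + (1/15) * Real.cosh t))
      ∧ (Real.exp (t^2/(2-α)) ≤ ∫ ω, Real.exp (t * X ω) ∂μ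
        ∧ ∫ ω, Real.exp (t * X ω) ∂μ
            ≤ Real.exp ((1/24) * t^4 * (14/15 + (1/15) * Real.cosh t))
              * Real.exp (t^2/(2-α))) := by
  intro t
  have hlower := sq_div_le_two_mul_integral_cosh_mul_sub_one_mul_rpow t hα.2
  have hupper := two_mul_integral_cosh_mul_sub_one_mul_rpow_le t hα.2
  refine ⟨⟨hlower, hupper⟩, ?_, ?_⟩
  · rw [hmgf t]
    exact exp_le_exp.mpr hlower
  · rw [hmgf t, ← exp_add]
    exact exp_le_exp.mpr (by linarith)

/-- Fix `α ∈ (1,2)`. For every `t ∈ ℝ`,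
`t²/(2-α) ≤ 2∫₀¹ (cosh(tx) - 1) x^{-α-1} dx ≤ t²/(2-α) + (1/24)t⁴(14/15 + (1/15)cosh t)`.
Equivalently, a random variable `X̃₁` with moment generating function
`E[exp(t X̃₁)] = exp(2∫₀¹ (cosh(tx) - 1) x^{-α-1} dx)` satisfies
`exp(t²/(2-α)) ≤ E[exp(t X̃₁)] ≤ exp((1/24)t⁴(14/15 + (1/15)cosh t)) · exp(t²/(2-α))`. -/
theorem mgf_bounds_small_jumps_symmetric
    {Ω : Type*} [MeasurableSpace Ω] (μ : Measure Ω) [IsProbabilityMeasure μ]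
    (α : ℝ) (hα : α ∈ Set.Ioo (1:ℝ) 2)
    (X : Ω → ℝ) (hXmeas : Measurable X)
    (hXint : ∀ t : ℝ, Integrable (fun ω => Real.exp (t * X ω)) μ)
    (hmgf : ∀ t : ℝ, ∫ ω, Real.exp (t * X ω) ∂μ
      = Real.exp (2 * ∫ x in Set.Ioo (0:ℝ) 1, (Real.cosh (t*x) - 1) * x ^ (-α-1))) :
    ∀ t : ℝ,
      (t^2/(2-α) ≤ 2 * ∫ x in Set.Ioo (0:ℝ) 1, (Real.cosh (t*x) - 1) * x ^ (-α-1)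
        ∧ 2 * ∫ x in Set.Ioo (0:ℝ) 1, (Real.cosh (t*x) - 1) * x ^ (-α-1)
            ≤ t^2/(2-α) + (1/24) * t^4 * (14/15 + (1/15) * Real.cosh t))
      ∧ (Real.exp (t^2/(2-α)) ≤ ∫ ω, Real.exp (t * X ω) ∂μ
        ∧ ∫ ω, Real.exp (t * X ω) ∂μ
            ≤ Real.exp ((1/24) * t^4 * (14/15 + (1/15) * Real.cosh t))
              * Real.exp (t^2/(2-α))) :=
  mgf_bounds_small_jumps_symmetric_general μ α hα X hmgf
end

section
/- For every y with 0 ≤ y ≤ 2/(2−α) one has P( X̃₁ ≥ y ) ≤ e^{2/45} exp(−(1/4)(2−α) y²), and for every y ∈ [2/√(2−α), 2/(2−α)] one has P( X̃₁ ≥ (√2/4) y ) ≥ (1/3) exp(−(2−α) y²). -/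
/-!
Write the log-mgf of `X̃₁` as `2 * levyIntegral α t`. Since `cosh u - 1 - u²/2` is a power
series in `u²` with nonnegative coefficients starting at `u⁴`, for `|t| ≤ v` the integral
`levyIntegral α t` exceeds `t²/(2(2-α))` by at most `(cosh v - 1 - v²/2)/(4-α)`, and its
increments satisfy `levyIntegral α t - levyIntegral α r ≥ (t² - r²)/(2(2-α))` for
`|r| ≤ |t|`.
The upper tail is then the Chernoff bound at `t = (2-α)y/2`.
For the lower tail, tilt by `e^{tX}` with `t = (2-α)y/2 = r + s`: the part of `E[e^{tX}]` on
`{X < a}` is at most `e^{sa} E[e^{rX}]`, which the increment bound makes a small fraction of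
`E[e^{tX}]`; Cauchy–Schwarz on `{X ≥ a}` against `E[e^{2tX}]` then bounds `P(X ≥ a)` from
below.
-/

open MeasureTheory ProbabilityTheory Real Set

open Nat in
lemma hasSum_cosh_sub_one_sub_sq_div_two (u : ℝ) :
    HasSum (fun n : ℕ => (u ^ 2) ^ (n + 2) / (2 * (n + 2))!) (cosh u - 1 - u ^ 2 / 2) := by
  have h := (hasSum_nat_add_iff' 2).mpr (Real.hasSum_cosh u)
  rw [show cosh u - 1 - u ^ 2 / 2 = cosh u - ∑ i ∈ Finset.range 2, u ^ (2 * i) / (2 * i)! by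
    norm_num [Finset.sum_range_succ]; ring]
  simpa only [pow_mul] using h

lemma cosh_sub_one_sub_sq_div_two_mono {u v : ℝ} (h : u ^ 2 ≤ v ^ 2) :
    cosh u - 1 - u ^ 2 / 2 ≤ cosh v - 1 - v ^ 2 / 2 :=
  hasSum_le (fun n => by gcongr) (hasSum_cosh_sub_one_sub_sq_div_two u)
    (hasSum_cosh_sub_one_sub_sq_div_two v)

lemma cosh_sub_one_sub_sq_div_two_nonneg (u : ℝ) : 0 ≤ cosh u - 1 - u ^ 2 / 2 := by
  simpa using cosh_sub_one_sub_sq_div_two_mono (u := 0) (v := u) (by simpa using sq_nonneg u)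

lemma cosh_mul_sub_one_sub_sq_div_two_le {x u : ℝ} (hx : x ^ 2 ≤ 1) :
    cosh (x * u) - 1 - (x * u) ^ 2 / 2 ≤ x ^ 4 * (cosh u - 1 - u ^ 2 / 2) := by
  refine hasSum_le (fun n => ?_) (hasSum_cosh_sub_one_sub_sq_div_two (x * u))
    ((hasSum_cosh_sub_one_sub_sq_div_two u).mul_left (x ^ 4))
  have hx' : (x ^ 2) ^ (n + 2) ≤ x ^ 4 := by
    rw [show x ^ 4 = (x ^ 2) ^ 2 by ring]
    exact pow_le_pow_of_le_one (sq_nonneg x) hx (by omega)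
  rw [mul_pow, mul_pow, mul_div_assoc]
  gcongr

lemma cosh_mul_sub_one_le {s v x : ℝ} (hsv : s ^ 2 ≤ v ^ 2) (hx : x ^ 2 ≤ 1) :
    cosh (s * x) - 1 ≤ s ^ 2 / 2 * x ^ 2 + (cosh v - 1 - v ^ 2 / 2) * x ^ 4 := by
  have h := cosh_mul_sub_one_sub_sq_div_two_le (u := s) hx
  have hv := mul_le_mul_of_nonneg_left (cosh_sub_one_sub_sq_div_two_mono hsv)
    (by positivity : (0 : ℝ) ≤ x ^ 4)
  rw [mul_comm s x]
  linarith

lemma rpow_natCast_sub_sub_one_eq_pow_mul {x : ℝ} (hx : 0 < x) (α : ℝ) (n : ℕ) :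
    x ^ (n - α - 1) = x ^ n * x ^ (-α - 1) := by
  rw [show (n : ℝ) - α - 1 = -α - 1 + n by ring, rpow_add_natCast hx.ne', mul_comm]

lemma integral_rpow_Ioo_zero_one {r : ℝ} (hr : -1 < r) :
    ∫ x in Ioo (0 : ℝ) 1, x ^ r = (r + 1)⁻¹ := by
  rw [← integral_Ioc_eq_integral_Ioo, ← intervalIntegral.integral_of_le zero_le_one,
    integral_rpow (Or.inl hr), one_rpow, zero_rpow (by linarith), sub_zero, one_div]

lemma integrableOn_rpow_Ioo_zero_one {r : ℝ} (hr : -1 < r) :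
    IntegrableOn (fun x : ℝ => x ^ r) (Ioo 0 1) :=
  (intervalIntegral.integrableOn_Ioo_rpow_iff zero_lt_one).mpr hr

noncomputable def levyIntegral (α t : ℝ) : ℝ :=
  ∫ x in Ioo (0 : ℝ) 1, (cosh (t * x) - 1) * x ^ (-α - 1)

section LevyIntegral

variable {α : ℝ}

lemma levyIntegrand_le {s v x : ℝ} (hsv : s ^ 2 ≤ v ^ 2) (hx : x ∈ Ioo (0 : ℝ) 1) :
    (cosh (s * x) - 1) * x ^ (-α - 1)
      ≤ s ^ 2 / 2 * x ^ (1 - α) + (cosh v - 1 - v ^ 2 / 2) * x ^ (3 - α) := by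
  have hx2 : x ^ 2 ≤ 1 := pow_le_one₀ hx.1.le hx.2.le
  have e2 := rpow_natCast_sub_sub_one_eq_pow_mul hx.1 α 2
  have e4 := rpow_natCast_sub_sub_one_eq_pow_mul hx.1 α 4
  norm_num at e2 e4
  rw [show (1 : ℝ) - α = 2 - α - 1 by ring, show (3 : ℝ) - α = 4 - α - 1 by ring, e2, e4]
  have := mul_le_mul_of_nonneg_right (cosh_mul_sub_one_le hsv hx2)
    (rpow_nonneg hx.1.le (-α - 1))
  linarith

lemma levyIntegrand_sub_levyIntegrand_ge {r t x : ℝ} (hrt : r ^ 2 ≤ t ^ 2)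
    (hx : x ∈ Ioo (0 : ℝ) 1) :
    (t ^ 2 - r ^ 2) / 2 * x ^ (1 - α)
      ≤ (cosh (t * x) - 1) * x ^ (-α - 1) - (cosh (r * x) - 1) * x ^ (-α - 1) := by
  have e2 := rpow_natCast_sub_sub_one_eq_pow_mul hx.1 α 2
  norm_num at e2
  have hmono := cosh_sub_one_sub_sq_div_two_mono (u := r * x) (v := t * x)
    (by rw [mul_pow, mul_pow]; gcongr)
  have := mul_le_mul_of_nonneg_right hmono (rpow_nonneg hx.1.le (-α - 1))
  rw [show (1 : ℝ) - α = 2 - α - 1 by ring, e2]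
  linarith

variable (hα : α < 2)
include hα

lemma integrableOn_levyIntegrand (s : ℝ) :
    IntegrableOn (fun x : ℝ => (cosh (s * x) - 1) * x ^ (-α - 1)) (Ioo 0 1) := by
  refine Integrable.mono'
    (((integrableOn_rpow_Ioo_zero_one (by linarith : -1 < 1 - α)).const_mul (s ^ 2 / 2)).add
      ((integrableOn_rpow_Ioo_zero_one (by linarith : -1 < 3 - α)).const_mul
        (cosh s - 1 - s ^ 2 / 2)))
    ?_ ((ae_restrict_iff' measurableSet_Ioo).mpr (.of_forall fun x hx => ?_))
  · refine ContinuousOn.aestronglyMeasurable (fun x hx => ?_) measurableSet_Ioo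
    exact (((continuous_cosh.comp (continuous_const_mul s)).sub continuous_const).continuousAt.mul
      (continuousAt_rpow_const x _ (Or.inl hx.1.ne'))).continuousWithinAt
  · have h1 : 0 ≤ cosh (s * x) - 1 := by linarith [one_le_cosh (s * x)]
    rw [norm_of_nonneg (mul_nonneg h1 (rpow_nonneg hx.1.le _))]
    exact levyIntegrand_le le_rfl hx

lemma levyIntegral_le {s v : ℝ} (hsv : s ^ 2 ≤ v ^ 2) :
    levyIntegral α s ≤ s ^ 2 / (2 * (2 - α)) + (cosh v - 1 - v ^ 2 / 2) / (4 - α) := by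
  have h1 := integrableOn_rpow_Ioo_zero_one (by linarith : -1 < 1 - α)
  have h3 := integrableOn_rpow_Ioo_zero_one (by linarith : -1 < 3 - α)
  have hg : IntegrableOn
      (fun x : ℝ => s ^ 2 / 2 * x ^ (1 - α) + (cosh v - 1 - v ^ 2 / 2) * x ^ (3 - α))
      (Ioo 0 1) :=
    (h1.const_mul _).add (h3.const_mul _)
  calc levyIntegral α s
      ≤ ∫ x in Ioo (0 : ℝ) 1,
          (s ^ 2 / 2 * x ^ (1 - α) + (cosh v - 1 - v ^ 2 / 2) * x ^ (3 - α)) :=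
        setIntegral_mono_on (integrableOn_levyIntegrand hα s)
          hg measurableSet_Ioo fun x hx => levyIntegrand_le hsv hx
    _ = s ^ 2 / (2 * (2 - α)) + (cosh v - 1 - v ^ 2 / 2) / (4 - α) := by
        rw [integral_add (h1.const_mul _) (h3.const_mul _), integral_const_mul, integral_const_mul,
          integral_rpow_Ioo_zero_one (by linarith), integral_rpow_Ioo_zero_one (by linarith),
          show 1 - α + 1 = 2 - α by ring, show 3 - α + 1 = 4 - α by ring]
        simp only [div_eq_mul_inv, mul_inv]
        ring

lemma sq_sub_sq_div_le_levyIntegral_sub {r t : ℝ} (hrt : r ^ 2 ≤ t ^ 2) :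
    (t ^ 2 - r ^ 2) / (2 * (2 - α)) ≤ levyIntegral α t - levyIntegral α r := by
  have h1 := integrableOn_rpow_Ioo_zero_one (by linarith : -1 < 1 - α)
  calc (t ^ 2 - r ^ 2) / (2 * (2 - α))
      = ∫ x in Ioo (0 : ℝ) 1, (t ^ 2 - r ^ 2) / 2 * x ^ (1 - α) := by
        rw [integral_const_mul, integral_rpow_Ioo_zero_one (by linarith),
          show 1 - α + 1 = 2 - α by ring]
        simp only [div_eq_mul_inv, mul_inv]
        ring
    _ ≤ ∫ x in Ioo (0 : ℝ) 1,
          ((cosh (t * x) - 1) * x ^ (-α - 1) - (cosh (r * x) - 1) * x ^ (-α - 1)) :=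
        setIntegral_mono_on (h1.const_mul _)
          ((integrableOn_levyIntegrand hα t).sub (integrableOn_levyIntegrand hα r))
          measurableSet_Ioo fun x hx => levyIntegrand_sub_levyIntegrand_ge hrt hx
    _ = levyIntegral α t - levyIntegral α r :=
        integral_sub (integrableOn_levyIntegrand hα t) (integrableOn_levyIntegrand hα r)

lemma sq_div_le_levyIntegral (s : ℝ) : s ^ 2 / (2 * (2 - α)) ≤ levyIntegral α s := by
  simpa [levyIntegral] using
    sq_sub_sq_div_le_levyIntegral_sub hα (r := 0) (t := s) (by simpa using sq_nonneg s)

lemma two_mul_levyIntegral_le {s v : ℝ} (hsv : s ^ 2 ≤ v ^ 2) :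
    2 * levyIntegral α s ≤ s ^ 2 / (2 - α) + (cosh v - 1 - v ^ 2 / 2) := by
  have hK := levyIntegral_le hα hsv
  have hφ : (cosh v - 1 - v ^ 2 / 2) / (4 - α) ≤ (cosh v - 1 - v ^ 2 / 2) / 2 :=
    div_le_div_of_nonneg_left (cosh_sub_one_sub_sq_div_two_nonneg v) two_pos (by linarith)
  rw [mul_comm 2 (2 - α), ← div_div] at hK
  linarith

end LevyIntegral

section ExponentialMoments

variable {Ω : Type*} [MeasurableSpace Ω] {μ : Measure Ω}

lemma sq_integral_le_measureReal_univ_mul_integral_sq [IsFiniteMeasure μ] {f : Ω → ℝ}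
    (hf : Integrable f μ) (hf2 : Integrable (fun ω => f ω ^ 2) μ) :
    (∫ ω, f ω ∂μ) ^ 2 ≤ μ.real univ * ∫ ω, f ω ^ 2 ∂μ := by
  set I := ∫ ω, f ω ∂μ
  rcases (measureReal_nonneg : 0 ≤ μ.real univ).eq_or_lt with hP | hP
  · have hμ : μ = 0 := by
      rw [← Measure.measure_univ_eq_zero]
      rwa [eq_comm, measureReal_eq_zero_iff] at hP
    simp [I, hμ]
  · -- AM-GM `2 c f ≤ c² + f²`, integrated, with the optimal `c = I / μ(Ω)`
    set c := I / μ.real univ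
    have h : ∫ ω, 2 * c * f ω ∂μ ≤ ∫ ω, (c ^ 2 + f ω ^ 2) ∂μ :=
      integral_mono (hf.const_mul _) ((integrable_const _).add hf2)
        fun ω => by nlinarith [sq_nonneg (c - f ω)]
    rw [integral_const_mul, integral_add (integrable_const _) hf2, integral_const,
      smul_eq_mul] at h
    have hc : 2 * c * I = c ^ 2 * μ.real univ + I ^ 2 / μ.real univ := by
      simp only [c]; field_simp; ring
    rw [← div_le_iff₀' hP]
    nlinarith

variable {X : Ω → ℝ}

lemma setIntegral_exp_mul_lt_le (hX : Measurable X) {r s a : ℝ} (hs : 0 ≤ s)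
    (hr : Integrable (fun ω => exp (r * X ω)) μ)
    (ht : Integrable (fun ω => exp ((r + s) * X ω)) μ) :
    ∫ ω in {ω | X ω < a}, exp ((r + s) * X ω) ∂μ ≤ exp (s * a) * mgf X μ r := by
  calc ∫ ω in {ω | X ω < a}, exp ((r + s) * X ω) ∂μ
      ≤ ∫ ω in {ω | X ω < a}, exp (s * a) * exp (r * X ω) ∂μ := by
        refine setIntegral_mono_on ht.integrableOn (hr.const_mul _).integrableOn
          (measurableSet_lt hX measurable_const) fun ω hω => ?_
        rw [← exp_add, exp_le_exp]
        nlinarith [mul_le_mul_of_nonneg_left (le_of_lt hω) hs]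
    _ ≤ exp (s * a) * mgf X μ r := by
        rw [integral_const_mul]
        gcongr
        exact setIntegral_le_integral hr (.of_forall fun ω => (exp_pos _).le)

lemma mgf_sub_sq_le_measureReal_ge_mul_mgf [IsFiniteMeasure μ] (hX : Measurable X) {r s a : ℝ}
    (hs : 0 ≤ s)
    (hr : Integrable (fun ω => exp (r * X ω)) μ)
    (ht : Integrable (fun ω => exp ((r + s) * X ω)) μ)
    (h2t : Integrable (fun ω => exp (2 * (r + s) * X ω)) μ)
    (hD : exp (s * a) * mgf X μ r ≤ mgf X μ (r + s)) :
    (mgf X μ (r + s) - exp (s * a) * mgf X μ r) ^ 2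
      ≤ μ.real {ω | a ≤ X ω} * mgf X μ (2 * (r + s)) := by
  set t := r + s
  set A := {ω | a ≤ X ω}
  have hA : MeasurableSet A := measurableSet_le measurable_const hX
  have hsq : ∀ ω, exp (t * X ω) ^ 2 = exp (2 * t * X ω) := fun ω => by
    rw [← exp_nat_mul]; ring_nf
  have hAc : Aᶜ = {ω | X ω < a} := by ext; simp [A]
  have hlow : mgf X μ t - exp (s * a) * mgf X μ r ≤ ∫ ω in A, exp (t * X ω) ∂μ := by
    have := setIntegral_exp_mul_lt_le (μ := μ) hX (a := a) hs hr ht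
    rw [← hAc] at this
    have hsplit := integral_add_compl hA ht
    simp only [mgf] at this ⊢
    linarith
  have hCS : (∫ ω in A, exp (t * X ω) ∂μ) ^ 2
      ≤ μ.real A * ∫ ω in A, exp (2 * t * X ω) ∂μ := by
    have := sq_integral_le_measureReal_univ_mul_integral_sq (μ := μ.restrict A) ht.integrableOn
      (by simp only [hsq]; exact h2t.integrableOn)
    simpa only [measureReal_restrict_apply_univ, hsq] using this
  calc (mgf X μ t - exp (s * a) * mgf X μ r) ^ 2
      ≤ (∫ ω in A, exp (t * X ω) ∂μ) ^ 2 := pow_le_pow_left₀ (by linarith) hlow 2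
    _ ≤ μ.real A * ∫ ω in A, exp (2 * t * X ω) ∂μ := hCS
    _ ≤ μ.real A * mgf X μ (2 * t) := by
        gcongr
        exact setIntegral_le_integral h2t (.of_forall fun ω => (exp_pos _).le)

lemma le_measureReal_ge_of_mgf_le [IsProbabilityMeasure μ] (hX : Measurable X)
    (hXint : ∀ t, Integrable (fun ω => exp (t * X ω)) μ) {r s a q m M : ℝ} (hs : 0 ≤ s)
    (hq : q ≤ 1) (hm : 0 ≤ m) (hgap : exp (s * a) * mgf X μ r ≤ q * mgf X μ (r + s))
    (hmgf : m ≤ mgf X μ (r + s)) (hM : mgf X μ (2 * (r + s)) ≤ M) :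
    (1 - q) ^ 2 * m ^ 2 / M ≤ μ.real {ω | a ≤ X ω} := by
  have hM0 := mgf_pos (μ := μ) (X := X) (hXint (2 * (r + s)))
  have hD : (1 - q) * m ≤ mgf X μ (r + s) - exp (s * a) * mgf X μ r := by nlinarith
  have hPZ := mgf_sub_sq_le_measureReal_ge_mul_mgf hX hs (hXint r) (hXint _) (hXint _)
    (hgap.trans (mul_le_of_le_one_left mgf_nonneg hq))
  calc (1 - q) ^ 2 * m ^ 2 / M
      ≤ (mgf X μ (r + s) - exp (s * a) * mgf X μ r) ^ 2 / mgf X μ (2 * (r + s)) := by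
        rw [← mul_pow]
        gcongr
    _ ≤ μ.real {ω | a ≤ X ω} := (div_le_iff₀ hM0).mpr hPZ

end ExponentialMoments

lemma cosh_one_le : cosh 1 ≤ 139 / 90 := by
  have he := exp_one_lt_d9
  have he' := exp_one_gt_d9
  have hinv : exp (-1) * exp 1 = 1 := by rw [← exp_add]; norm_num
  rw [cosh_eq]
  nlinarith [exp_pos (-1)]

lemma cosh_two_le : cosh 2 ≤ 19 / 5 := by
  have h := cosh_sq (1 : ℝ)
  have h1 := cosh_one_le
  have h0 : 0 ≤ cosh 1 := (cosh_pos 1).le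
  rw [show (2 : ℝ) = 2 * 1 by norm_num, cosh_two_mul]
  nlinarith

lemma exp_neg_div_three_le {z : ℝ} (hz : 4 ≤ z) :
    1 / 3 * exp (-z) ≤ (1 - exp (-(z / 10))) ^ 2 * exp (z / 4) ^ 2 / exp (z + 4 / 5) := by
  set u := exp (-(2 / 5) : ℝ)
  have hu0 : 0 < u := exp_pos _
  have hu : u ≤ 25 / 37 := by
    have := quadratic_le_exp_of_nonneg (by norm_num : (0 : ℝ) ≤ 2 / 5)
    rw [show u = (exp (2 / 5))⁻¹ from exp_neg _, inv_le_comm₀ (exp_pos _) (by norm_num)]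
    linarith
  have hq : exp (-(z / 10)) ≤ u := exp_le_exp.mpr (by linarith)
  have hsplit : exp (-z) = exp (z / 4) ^ 2 / exp (z + 4 / 5) * exp (4 / 5 - z / 2) := by
    rw [← exp_nat_mul, ← exp_sub, ← exp_add]; ring_nf
  have hcube : exp (4 / 5 - z / 2) ≤ u ^ 3 := by
    rw [← exp_nat_mul]; exact exp_le_exp.mpr (by push_cast; linarith)
  have hpoly : u ^ 3 ≤ 3 * (1 - u) ^ 2 := by nlinarith
  have hsq : (1 - u) ^ 2 ≤ (1 - exp (-(z / 10))) ^ 2 :=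
    pow_le_pow_left₀ (by linarith) (by linarith) 2
  have hE : 0 < exp (z / 4) ^ 2 / exp (z + 4 / 5) := by positivity
  rw [hsplit, mul_div_assoc]
  nlinarith [mul_le_mul_of_nonneg_left (hcube.trans hpoly) hE.le,
    mul_le_mul_of_nonneg_left hsq hE.le]

lemma four_le_mul_sq_of_two_div_sqrt_le {β y : ℝ} (hβ : 0 < β) (hy : 2 / sqrt β ≤ y) :
    4 ≤ β * y ^ 2 := by
  have h := pow_le_pow_left₀ (by positivity) hy 2
  rwa [div_pow, sq_sqrt hβ.le, div_le_iff₀ hβ, mul_comm, show (2 : ℝ) ^ 2 = 4 by norm_num] at h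

section Tails

variable {Ω : Type*} [MeasurableSpace Ω] {μ : Measure Ω} {α : ℝ} {X : Ω → ℝ}

lemma measureReal_ge_le_of_mgf_eq [IsFiniteMeasure μ] (hα : α < 2)
    (hXint : ∀ t, Integrable (fun ω => exp (t * X ω)) μ)
    (hmgf : ∀ t, mgf X μ t = exp (2 * levyIntegral α t)) {y : ℝ} (hy0 : 0 ≤ y)
    (hy : y ≤ 2 / (2 - α)) :
    μ.real {ω | y ≤ X ω} ≤ exp (2 / 45) * exp (-(1 / 4) * (2 - α) * y ^ 2) := by
  have h2α : 0 < 2 - α := by linarith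
  set t := (2 - α) * y / 2
  have ht0 : 0 ≤ t := by positivity
  have ht1 : t ≤ 1 := by
    rw [le_div_iff₀ h2α] at hy
    simp only [t]
    linarith
  have hK := two_mul_levyIntegral_le hα (s := t) (v := 1) (by nlinarith)
  have ht2 : t ^ 2 / (2 - α) = (2 - α) * y ^ 2 / 4 := by
    simp only [t]; field_simp; ring
  calc μ.real {ω | y ≤ X ω}
      ≤ exp (-t * y) * mgf X μ t := measure_ge_le_exp_mul_mgf y ht0 (hXint t)
    _ = exp (-t * y + 2 * levyIntegral α t) := by rw [hmgf, exp_add]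
    _ ≤ exp (2 / 45 + -(1 / 4) * (2 - α) * y ^ 2) := by
        refine exp_le_exp.mpr ?_
        simp only [t] at hK ht2 ⊢
        nlinarith [cosh_one_le]
    _ = exp (2 / 45) * exp (-(1 / 4) * (2 - α) * y ^ 2) := exp_add _ _

lemma le_measureReal_ge_of_mgf_eq [IsProbabilityMeasure μ] (hα : α < 2) (hX : Measurable X)
    (hXint : ∀ t, Integrable (fun ω => exp (t * X ω)) μ)
    (hmgf : ∀ t, mgf X μ t = exp (2 * levyIntegral α t)) {y : ℝ}
    (hy₁ : 2 / sqrt (2 - α) ≤ y) (hy₂ : y ≤ 2 / (2 - α)) :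
    1 / 3 * exp (-(2 - α) * y ^ 2) ≤ μ.real {ω | sqrt 2 / 4 * y ≤ X ω} := by
  have h2α : 0 < 2 - α := by linarith
  have hy0 : 0 ≤ y := le_trans (by positivity) hy₁
  set w := (2 - α) * y
  set z := (2 - α) * y ^ 2
  have hw0 : 0 ≤ w := by positivity
  have hw2 : w ≤ 2 := by
    rw [le_div_iff₀ h2α] at hy₂
    simp only [w]
    linarith
  have hz : 4 ≤ z := four_le_mul_sq_of_two_div_sqrt_le h2α hy₁
  have hwz : w ^ 2 / (2 - α) = z := by simp only [w, z]; field_simp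
  have hrs : w / 5 + 3 * w / 10 = w / 2 := by ring
  have hq : exp (-(z / 10)) < 1 := exp_lt_one_iff.mpr (by linarith)
  -- from `r = w / 5` to `r + s = w / 2` the exponent `2 * levyIntegral α` gains `21 z / 100`,
  -- the cutoff costs `s a = 3 √2 z / 40 ≤ 11 z / 100`, leaving `z / 10`
  have hgap : exp (3 * w / 10 * (sqrt 2 / 4 * y)) * mgf X μ (w / 5)
      ≤ exp (-(z / 10)) * mgf X μ (w / 2) := by
    have hK := sq_sub_sq_div_le_levyIntegral_sub hα (r := w / 5) (t := w / 2) (by nlinarith)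
    have hsqrt : sqrt 2 ≤ 22 / 15 := by
      rw [sqrt_le_left (by norm_num)]; norm_num
    have hsa : 3 * w / 10 * (sqrt 2 / 4 * y) = 3 * sqrt 2 / 40 * z := by simp only [w, z]; ring
    have hK' : ((w / 2) ^ 2 - (w / 5) ^ 2) / (2 * (2 - α)) = 21 / 200 * z := by
      rw [← hwz]; field_simp; ring
    rw [hmgf, hmgf, ← exp_add, ← exp_add]
    refine exp_le_exp.mpr ?_
    nlinarith
  have hM : mgf X μ w ≤ exp (z + 4 / 5) := by
    have hK := two_mul_levyIntegral_le hα (s := w) (v := 2) (by nlinarith)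
    rw [hwz] at hK
    rw [hmgf]
    exact exp_le_exp.mpr (by linarith [cosh_two_le])
  have hmgf_t : exp (z / 4) ≤ mgf X μ (w / 2) := by
    have hK := sq_div_le_levyIntegral hα (w / 2)
    have : (w / 2) ^ 2 / (2 * (2 - α)) = z / 8 := by rw [← hwz]; field_simp; ring
    rw [hmgf]
    exact exp_le_exp.mpr (by linarith)
  rw [show -(2 - α) * y ^ 2 = -z by ring]
  refine (exp_neg_div_three_le hz).trans ?_
  exact le_measureReal_ge_of_mgf_le hX hXint (r := w / 5) (s := 3 * w / 10) (by positivity)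
    hq.le (exp_pos _).le (by rwa [hrs]) (by rwa [hrs])
    (by rwa [hrs, show 2 * (w / 2) = w by ring])

end Tails

/-- Fix `α ∈ (1,2)` and let `X̃₁` be a random variable with moment
generating function `E[exp(t X̃₁)] = exp(2∫₀¹ (cosh(tx) - 1) x^{-α-1} dx)`. Then for
`0 ≤ y ≤ 2/(2-α)` one has `P(X̃₁ ≥ y) ≤ e^{2/45} e^{-(2-α)y²/4}`, and for
`y ∈ [2/√(2-α), 2/(2-α)]` one has `P(X̃₁ ≥ (√2/4)y) ≥ (1/3) e^{-(2-α)y²}`. -/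
theorem gaussian_tail_small_jumps_symmetric
    {Ω : Type*} [MeasurableSpace Ω] (μ : Measure Ω) [IsProbabilityMeasure μ]
    (α : ℝ) (hα : α ∈ Set.Ioo (1:ℝ) 2)
    (X : Ω → ℝ) (hXmeas : Measurable X)
    (hXint : ∀ t : ℝ, Integrable (fun ω => Real.exp (t * X ω)) μ)
    (hmgf : ∀ t : ℝ, ∫ ω, Real.exp (t * X ω) ∂μ
      = Real.exp (2 * ∫ x in Set.Ioo (0:ℝ) 1, (Real.cosh (t*x) - 1) * x ^ (-α-1))) :
    (∀ y : ℝ, 0 ≤ y → y ≤ 2/(2-α) →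
      (μ {ω | y ≤ X ω}).toReal
        ≤ Real.exp (2/45) * Real.exp (-(1/4) * (2-α) * y^2))
    ∧ (∀ y ∈ Set.Icc (2 / Real.sqrt (2-α)) (2/(2-α)),
      (1/3) * Real.exp (-(2-α) * y^2)
        ≤ (μ {ω | (Real.sqrt 2 / 4) * y ≤ X ω}).toReal) := by
  have hmgf' : ∀ t, mgf X μ t = exp (2 * levyIntegral α t) := hmgf
  exact ⟨fun y hy₀ hy => measureReal_ge_le_of_mgf_eq hα.2 hXint hmgf' hy₀ hy,
    fun y hy => le_measureReal_ge_of_mgf_eq hα.2 hXmeas hXint hmgf' hy.1 hy.2⟩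
end
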